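/- arXiv:2409.08571 — 3 statements merged into one kernel-verified Lean document; each statement's English description precedes it below -/
import Mathlib

section
/- Let K be a solvable reducible subgroup of GL(2,F) of cube-free order m with p ∤ m. Then there exists g ∈ GL(2,F) such that gKg⁻¹ ≤ D(2,q), and there exist positive integers l and s with l ∣ q−1 and s ∣ q−1 such that K is isomorphic to the direct product of a cyclic group of order l and a cyclic group of order s. -/
open Matrix

/-- A positive integer is cube-free if no prime cube divides it. -/
def CubeFree (m : ℕ) : Prop := ∀ r : ℕ, r.Prime → ¬ r ^ 3 ∣ m

/-- A 2×2 matrix is diagonal. -/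
def IsDiag2 {F : Type} [Field F] (A : Matrix (Fin 2) (Fin 2) F) : Prop :=
  A 0 1 = 0 ∧ A 1 0 = 0

/-- `D(2,q)`: the subgroup of invertible diagonal matrices in `GL(2,F)`. -/
def Dsub (F : Type) [Field F] : Subgroup (GL (Fin 2) F) where
  carrier := {g | IsDiag2 (g : Matrix (Fin 2) (Fin 2) F)}
  one_mem' := by constructor <;> simp
  mul_mem' := by
    rintro a b ⟨ha1, ha2⟩ ⟨hb1, hb2⟩
    constructor <;>
      simp [Units.val_mul, Matrix.mul_apply, Fin.sum_univ_two, ha1, ha2, hb1, hb2]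
  inv_mem' := by
    rintro g ⟨h1, h2⟩
    have hAB : (g : Matrix (Fin 2) (Fin 2) F) * ((g⁻¹ : GL (Fin 2) F) : Matrix (Fin 2) (Fin 2) F) = 1 := by
      exact_mod_cast g.mul_inv
    have hdet : (g : Matrix (Fin 2) (Fin 2) F).det ≠ 0 := by
      have : IsUnit (g : Matrix (Fin 2) (Fin 2) F) := ⟨g, rfl⟩
      exact ((Matrix.isUnit_iff_isUnit_det _).mp this).ne_zero
    rw [Matrix.det_fin_two, h1, h2] at hdet
    simp only [zero_mul, mul_zero, sub_zero] at hdet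
    have h00 : (g : Matrix (Fin 2) (Fin 2) F) 0 0 ≠ 0 := left_ne_zero_of_mul hdet
    have h11 : (g : Matrix (Fin 2) (Fin 2) F) 1 1 ≠ 0 := right_ne_zero_of_mul hdet
    have e01 := congrFun (congrFun hAB 0) 1
    have e10 := congrFun (congrFun hAB 1) 0
    simp [Matrix.mul_apply, Fin.sum_univ_two, h1, h2, Matrix.one_apply] at e01 e10
    constructor <;> rw [Matrix.coe_units_inv]
    · rcases e01 with h | h
      · exact absurd h h00
      · exact h
    · rcases e10 with h | h
      · exact absurd h h11
      · exact h

/-- A subgroup of `GL(2,F)` is reducible if some nonzero proper subspace of `F²` is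
invariant under all its elements. -/
def Reducible (F : Type) [Field F] (K : Subgroup (GL (Fin 2) F)) : Prop :=
  ∃ W : Submodule F (Fin 2 → F), W ≠ ⊥ ∧ W ≠ ⊤ ∧
    ∀ g ∈ K, ∀ v ∈ W, Matrix.mulVec (g : Matrix (Fin 2) (Fin 2) F) v ∈ W

def piSplit {ι : Type} (Q : ι → Prop) [DecidablePred Q] (M : ι → Type) [∀ i, CommGroup (M i)] :
    (∀ i, M i) ≃* (∀ i : {x // Q x}, M i) × (∀ i : {x // ¬ Q x}, M i) :=
  { Equiv.piEquivPiSubtypeProd Q M with map_mul' := fun _ _ => rfl }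

lemma nat_prod_dvd {κ : Type} {n : ℕ} (a : κ → ℕ) (s : Finset κ)
    (hdvd : ∀ i ∈ s, a i ∣ n) (hcop : ∀ i ∈ s, ∀ j ∈ s, i ≠ j → Nat.Coprime (a i) (a j)) :
    ∏ i ∈ s, a i ∣ n := by
  classical
  induction s using Finset.induction_on with
  | empty => simpa using (Nat.one_dvd n)
  | @insert i s his ih =>
    rw [Finset.prod_insert his]
    refine Nat.Coprime.mul_dvd_of_dvd_of_dvd ?_ (hdvd i (by simp)) ?_
    · exact Nat.Coprime.prod_right (fun j hj => hcop i (by simp) j (by simp [hj])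
        (by rintro rfl; exact his hj))
    · exact ih (fun j hj => hdvd j (by simp [hj]))
        (fun j hj k hk hjk => hcop j (by simp [hj]) k (by simp [hk]) hjk)

lemma crt_pack {κ : Type} [Fintype κ] {n : ℕ} (a : κ → ℕ) (ha : ∀ i, 0 < a i)
    (hdvd : ∀ i, a i ∣ n) (hcop : Pairwise (Function.onFun Nat.Coprime a)) :
    ∃ L : ℕ, 0 < L ∧ L ∣ n ∧
      Nonempty ((∀ i, Multiplicative (ZMod (a i))) ≃* Multiplicative (ZMod L)) := by
  refine ⟨∏ i, a i, Finset.prod_pos (fun i _ => ha i), ?_, ?_⟩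
  · exact nat_prod_dvd a Finset.univ (fun i _ => hdvd i) (fun i _ j _ hij => hcop hij)
  · exact ⟨(MulEquiv.piMultiplicative _).symm.trans
      (AddEquiv.toMultiplicative (ZMod.prodEquivPi a hcop).symm.toAddEquiv)⟩

lemma abelian_classify (G : Type) [Group G] [Finite G] (hcomm : ∀ a b : G, a * b = b * a)
    (n : ℕ) (hn : 0 < n) (hpow : ∀ g : G, g ^ n = 1) (hcf : CubeFree (Nat.card G)) :
    ∃ l s : ℕ, 0 < l ∧ 0 < s ∧ l ∣ n ∧ s ∣ n ∧
      Nonempty (G ≃* Multiplicative (ZMod l) × Multiplicative (ZMod s)) := by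
  classical
  letI : CommGroup G := { (inferInstance : Group G) with mul_comm := hcomm }
  obtain ⟨ι, hι, p, hp, e, ⟨eqv⟩⟩ :=
    AddCommGroup.equiv_directSum_zmod_of_finite (Additive G)
  set a : ι → ℕ := fun i => p i ^ e i with ha_def
  have φ : G ≃* ∀ i, Multiplicative (ZMod (a i)) :=
    MulEquiv.toAdditive.symm <| eqv.trans <| (DirectSum.addEquivProd _).trans <|
      MulEquiv.toAdditiveRight <| MulEquiv.piMultiplicative _
  have ha : ∀ i, 0 < a i := fun i => pow_pos (hp i).pos _
  -- each factor's order divides n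
  have hdvd : ∀ i, a i ∣ n := by
    intro i
    haveI : NeZero (a i) := ⟨(ha i).ne'⟩
    set y : G := φ.symm (Pi.mulSingle i (Multiplicative.ofAdd (1 : ZMod (a i))))
    have h1 : (Pi.mulSingle i (Multiplicative.ofAdd (1 : ZMod (a i))) :
        ∀ j, Multiplicative (ZMod (a j))) ^ n = 1 := by
      have := congrArg φ (hpow y)
      rwa [map_pow, _root_.map_one, MulEquiv.apply_symm_apply] at this
    have h2 := congrFun h1 i
    simp only [Pi.pow_apply, Pi.mulSingle_eq_same, Pi.one_apply] at h2
    have h3 : ((n : ZMod (a i))) = 0 := by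
      rw [← ofAdd_nsmul, ← ofAdd_zero] at h2
      simpa [nsmul_eq_mul] using Multiplicative.ofAdd.injective h2
    exact (ZMod.natCast_eq_zero_iff n (a i)).mp h3
  have hcard : Nat.card G = ∏ i, a i := by
    rw [Nat.card_congr φ.toEquiv, Nat.card_pi]
    congr 1
    funext i
    haveI : NeZero (a i) := ⟨(ha i).ne'⟩
    rw [Nat.card_eq_fintype_card, Fintype.card_multiplicative, ZMod.card]
  -- ordering
  set r : ι → ℕ := fun i => ((Fintype.equivFin ι) i : ℕ) with hr_def
  have hrinj : Function.Injective r := fun i j h =>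
    (Fintype.equivFin ι).injective (Fin.ext h)
  set Q : ι → Prop := fun i => e i = 0 ∨ ∀ j, r j < r i → e j ≠ 0 → p j ≠ p i with hQ_def
  -- three distinct indices with the same prime and positive exponent is impossible
  have h3 : ∀ i j k : ι, r i < r j → r j < r k → e i ≠ 0 → e j ≠ 0 → e k ≠ 0 →
      p i = p j → p j = p k → False := by
    intro i j k hij hjk hei hej hek hpij hpjk
    have hij' : i ≠ j := fun h => absurd (congrArg r h) hij.ne
    have hjk' : j ≠ k := fun h => absurd (congrArg r h) hjk.ne
    have hik' : i ≠ k := fun h => absurd (congrArg r h) (hij.trans hjk).ne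
    refine hcf (p j) (hp j) ?_
    have hd : ∀ l : ι, e l ≠ 0 → p l = p j → p j ∣ a l := by
      intro l hel hpl
      calc p j = p l ^ 1 := by rw [hpl, pow_one]
      _ ∣ p l ^ e l := pow_dvd_pow _ (Nat.one_le_iff_ne_zero.mpr hel)
    have hsub : ({i, j, k} : Finset ι) ⊆ Finset.univ := Finset.subset_univ _
    have hprod : ∏ l ∈ ({i, j, k} : Finset ι), a l ∣ ∏ l, a l :=
      Finset.prod_dvd_prod_of_subset _ _ _ hsub
    have hmem : ∏ l ∈ ({i, j, k} : Finset ι), a l = a i * (a j * a k) := by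
      rw [Finset.prod_insert (by simp [hij', hik']),
        Finset.prod_insert (by simp [hjk']), Finset.prod_singleton]
    have : p j ^ 3 ∣ a i * (a j * a k) := by
      have := mul_dvd_mul (hd i hei hpij) (mul_dvd_mul (hd j hej rfl) (hd k hek hpjk.symm))
      calc p j ^ 3 = p j * (p j * p j) := by ring
      _ ∣ a i * (a j * a k) := this
    rw [hcard]
    exact this.trans (hmem ▸ hprod)
  -- coprimality on each part
  have hcop1 : ∀ i j : ι, Q i → Q j → i ≠ j → Nat.Coprime (a i) (a j) := by
    intro i j hQi hQj hne
    rcases eq_or_ne (e i) 0 with hei | hei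
    · simp [ha_def, hei, Nat.coprime_one_left]
    rcases eq_or_ne (e j) 0 with hej | hej
    · simp [ha_def, hej, Nat.coprime_one_right]
    have hpne : p i ≠ p j := by
      rcases hQi with h | hQi; · exact absurd h hei
      rcases hQj with h | hQj; · exact absurd h hej
      rcases lt_or_gt_of_ne (fun h => hne (hrinj h)) with hlt | hlt
      · exact hQj i hlt hei
      · exact fun h => hQi j hlt hej h.symm
    exact Nat.Coprime.pow (e i) (e j) ((Nat.coprime_primes (hp i) (hp j)).mpr hpne)
  have hcop2 : ∀ i j : ι, ¬ Q i → ¬ Q j → i ≠ j → Nat.Coprime (a i) (a j) := by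
    intro i j hQi hQj hne
    simp only [hQ_def, not_or, not_forall] at hQi hQj
    obtain ⟨hei, i₀, hi₀r, hei₀, hpi₀⟩ := hQi
    obtain ⟨hej, j₀, hj₀r, hej₀, hpj₀⟩ := hQj
    push_neg at hpi₀ hpj₀
    by_contra hnc
    have hpne : p i = p j := by
      by_contra hpp
      exact hnc (Nat.Coprime.pow (e i) (e j) ((Nat.coprime_primes (hp i) (hp j)).mpr hpp))
    rcases lt_or_gt_of_ne (fun h => hne (hrinj h)) with hlt | hlt
    · exact h3 i₀ i j hi₀r hlt hei₀ hei hej hpi₀ hpne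
    · exact h3 j₀ j i hj₀r hlt hej₀ hej hei hpj₀ hpne.symm
  have hsplit := piSplit Q (fun i => Multiplicative (ZMod (a i)))
  obtain ⟨l, hl0, hln, ⟨E₁⟩⟩ := crt_pack (n := n) (fun i : {x // Q x} => a i.1)
    (fun i => ha i.1) (fun i => hdvd i.1)
    (fun i j hij => hcop1 i.1 j.1 i.2 j.2 (fun h => hij (Subtype.ext h)))
  obtain ⟨s, hs0, hsn, ⟨E₂⟩⟩ := crt_pack (n := n) (fun i : {x // ¬ Q x} => a i.1)
    (fun i => ha i.1) (fun i => hdvd i.1)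
    (fun i j hij => hcop2 i.1 j.1 i.2 j.2 (fun h => hij (Subtype.ext h)))
  exact ⟨l, s, hl0, hs0, hln, hsn,
    ⟨(φ.trans hsplit).trans (MulEquiv.prodCongr E₁ E₂)⟩⟩

lemma key (F : Type) [Field F] [Fintype F] (K : Subgroup (GL (Fin 2) F)) [Fintype ↥K]
    (hred : Reducible F K) (hmF : ((Fintype.card ↥K : ℕ) : F) ≠ 0) :
    ∃ (w u' : Fin 2 → F) (lam mu : ↥K →* F), (∀ k, lam k ≠ 0) ∧ (∀ k, mu k ≠ 0) ∧
      LinearIndependent F ![w, u'] ∧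
      (∀ k : ↥K, ((k : GL (Fin 2) F) : Matrix (Fin 2) (Fin 2) F).mulVec w = lam k • w) ∧
      (∀ k : ↥K, ((k : GL (Fin 2) F) : Matrix (Fin 2) (Fin 2) F).mulVec u' = mu k • u') := by
  classical
  obtain ⟨W, hW0, hWtop, hWinv⟩ := hred
  obtain ⟨w, hwW, hw0⟩ := Submodule.exists_mem_ne_zero_of_ne_bot hW0
  have hV2 : Module.finrank F (Fin 2 → F) = 2 := by
    simp [Module.finrank_pi]
  -- W is the span of w
  have hWle : Submodule.span F {w} ≤ W := by
    rw [Submodule.span_le, Set.singleton_subset_iff]; exact hwW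
  have hWr : Module.finrank F W ≤ 1 := by
    by_contra h
    push_neg at h
    have h2 := W.finrank_le
    rw [hV2] at h2
    have : Module.finrank F W = 2 := le_antisymm h2 h
    exact hWtop (Submodule.eq_top_of_finrank_eq (by rw [this, hV2]))
  have hWspan : Submodule.span F {w} = W :=
    Submodule.eq_of_le_of_finrank_le hWle (by rw [finrank_span_singleton hw0]; exact hWr)
  obtain ⟨u, -, huW⟩ := SetLike.exists_of_lt (show W < ⊤ from lt_top_iff_ne_top.mpr hWtop)
  -- basis (w, u)
  have li : LinearIndependent F ![w, u] := by
    rw [LinearIndependent.pair_iff]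
    intro s t hst
    have ht : t = 0 := by
      by_contra ht
      apply huW
      rw [← hWspan]
      have h := congrArg (fun v => t⁻¹ • v) hst
      simp only [smul_add, smul_smul, smul_zero] at h
      rw [inv_mul_cancel₀ ht, one_smul] at h
      have hu : u = -((t⁻¹ * s) • w) := eq_neg_of_add_eq_zero_right h
      rw [hu]
      exact Submodule.neg_mem _ (Submodule.smul_mem _ _ (Submodule.mem_span_singleton_self w))
    refine ⟨?_, ht⟩
    rw [ht, zero_smul, add_zero] at hst
    exact (smul_eq_zero.mp hst).resolve_right hw0
  set b : Module.Basis (Fin 2) F (Fin 2 → F) :=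
    basisOfLinearIndependentOfCardEqFinrank li (by simp [hV2]) with hbdef
  have hb : ⇑b = ![w, u] := coe_basisOfLinearIndependentOfCardEqFinrank li _
  have hb0 : b 0 = w := by rw [hb]; rfl
  have hb1 : b 1 = u := by rw [hb]; rfl
  -- action
  set act : ↥K → (Fin 2 → F) → (Fin 2 → F) :=
    fun k v => ((k : GL (Fin 2) F) : Matrix (Fin 2) (Fin 2) F).mulVec v with hact_def
  have hact_mul : ∀ k h : ↥K, ∀ v, act (k * h) v = act k (act h v) := by
    intro k h v
    simp [hact_def, Matrix.mulVec_mulVec, Units.val_mul, -Matrix.mulVec_fin_two]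
  have hact_one : ∀ v, act 1 v = v := by
    intro v; simp [hact_def, Matrix.one_mulVec, -Matrix.mulVec_fin_two]
  have hact_cancel : ∀ (k : ↥K) v, act k⁻¹ (act k v) = v := by
    intro k v; rw [← hact_mul, inv_mul_cancel, hact_one]
  have hact_smul : ∀ (k : ↥K) (c : F) v, act k (c • v) = c • act k v := by
    intro k c v; simp [hact_def, Matrix.mulVec_smul, -Matrix.mulVec_fin_two]
  have hact_add : ∀ (k : ↥K) v₁ v₂, act k (v₁ + v₂) = act k v₁ + act k v₂ := by
    intro k v₁ v₂; simp [hact_def, Matrix.mulVec_add, -Matrix.mulVec_fin_two]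
  -- eigenvalue on w
  have hlam_ex : ∀ k : ↥K, ∃ c : F, act k w = c • w := by
    intro k
    have : act k w ∈ W := hWinv k.1 k.2 w hwW
    rw [← hWspan, Submodule.mem_span_singleton] at this
    obtain ⟨c, hc⟩ := this
    exact ⟨c, hc.symm⟩
  choose lam hlam using hlam_ex
  have hlam0 : ∀ k, lam k ≠ 0 := by
    intro k hc
    apply hw0
    have := hact_cancel k w
    rw [hlam k, hc, zero_smul] at this
    simpa [hact_def, Matrix.mulVec_zero, -Matrix.mulVec_fin_two] using this.symm
  have hscal : ∀ c d : F, c • w = d • w → c = d := by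
    intro c d hcd
    have : (c - d) • w = 0 := by rw [sub_smul, hcd, sub_self]
    exact sub_eq_zero.mp ((smul_eq_zero.mp this).resolve_right hw0)
  -- second coordinate functional
  set c1 : (Fin 2 → F) →ₗ[F] F := b.coord 1 with hc1def
  have hc1w : c1 w = 0 := by
    rw [← hb0, hc1def, Module.Basis.coord_apply, Module.Basis.repr_self]
    simp
  have hc1u : c1 u = 1 := by
    rw [← hb1, hc1def, Module.Basis.coord_apply, Module.Basis.repr_self]
    simp
  set c0 : (Fin 2 → F) →ₗ[F] F := b.coord 0 with hc0def
  have hdecomp : ∀ v, v = c0 v • w + c1 v • u := by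
    intro v
    have := b.sum_repr v
    rw [Fin.sum_univ_two, hb0, hb1] at this
    rw [hc0def, hc1def, Module.Basis.coord_apply, Module.Basis.coord_apply]
    exact this.symm
  set mu : ↥K → F := fun k => c1 (act k u) with hmudef
  have hmu_mul : ∀ k h : ↥K, mu (k * h) = mu k * mu h := by
    intro k h
    have h1 : act (k * h) u = c0 (act h u) • act k w + mu h • act k u := by
      rw [hact_mul]
      conv_lhs => rw [hdecomp (act h u)]
      rw [hact_add, hact_smul, hact_smul, hmudef]
    have := congrArg c1 h1
    simp only [hlam k, map_add, _root_.map_smul, hc1w, smul_eq_mul, mul_zero, zero_add] at this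
    exact this.trans (mul_comm _ _)
  have hmu_one : mu 1 = 1 := by
    rw [hmudef]; simp only; rw [hact_one, hc1u]
  have hmu0 : ∀ k, mu k ≠ 0 := by
    intro k hc
    apply huW
    rw [← hWspan]
    have h1 : act k u = c0 (act k u) • w := by
      conv_lhs => rw [hdecomp (act k u)]
      rw [show c1 (act k u) = 0 from hc, zero_smul, add_zero]
    have h2 : u = c0 (act k u) • act k⁻¹ w := by
      rw [← hact_smul, ← h1, hact_cancel]
    rw [h2, hlam k⁻¹, smul_smul]
    exact Submodule.smul_mem _ _ (Submodule.mem_span_singleton_self w)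
  -- averaged second eigenvector
  set u' : Fin 2 → F := (((Fintype.card ↥K : ℕ) : F))⁻¹ • ∑ k : ↥K, (mu k)⁻¹ • act k u
    with hu'def
  have hSsum : ∀ h : ↥K, act h (∑ k : ↥K, (mu k)⁻¹ • act k u)
      = ∑ k : ↥K, (mu k)⁻¹ • act h (act k u) := by
    intro h
    simp only [hact_def]
    rw [← Matrix.mulVecLin_apply, map_sum]
    refine Finset.sum_congr rfl fun k _ => ?_
    rw [_root_.map_smul, Matrix.mulVecLin_apply]
  have hu'eig : ∀ h : ↥K, act h u' = mu h • u' := by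
    intro h
    rw [hu'def, hact_smul, hSsum]
    have step : ∀ k : ↥K, (mu k)⁻¹ • act h (act k u)
        = mu h • ((mu (h * k))⁻¹ • act (h * k) u) := by
      intro k
      rw [hact_mul, hmu_mul, smul_smul]
      congr 1
      rw [mul_inv, ← mul_assoc, mul_inv_cancel₀ (hmu0 h), one_mul]
    rw [Finset.sum_congr rfl (fun k _ => step k), ← Finset.smul_sum, smul_comm]
    refine congrArg _ (congrArg _ ?_)
    exact Fintype.sum_equiv (Equiv.mulLeft h)
      (fun k => (mu (h * k))⁻¹ • act (h * k) u) (fun k => (mu k)⁻¹ • act k u) (fun k => rfl)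
  have hc1u' : c1 u' = 1 := by
    rw [hu'def, _root_.map_smul, map_sum]
    simp only [_root_.map_smul, smul_eq_mul]
    have hterm : ∀ k : ↥K, (mu k)⁻¹ * c1 (act k u) = 1 := fun k => inv_mul_cancel₀ (hmu0 k)
    rw [Finset.sum_congr rfl (fun k _ => hterm k), Finset.sum_const, Finset.card_univ,
      nsmul_eq_mul, mul_one, inv_mul_cancel₀ hmF]
  have li2 : LinearIndependent F ![w, u'] := by
    rw [LinearIndependent.pair_iff]
    intro s t hst
    have h1 := congrArg c1 hst
    simp only [map_add, _root_.map_smul, hc1w, hc1u', smul_eq_mul, mul_zero, mul_one,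
      zero_add, map_zero] at h1
    refine ⟨?_, h1⟩
    rw [h1, zero_smul, add_zero] at hst
    exact (smul_eq_zero.mp hst).resolve_right hw0
  have hlam_one : lam 1 = 1 := by
    refine hscal _ _ ?_
    rw [← hlam 1, hact_one, one_smul]
  have hlam_mul : ∀ k h : ↥K, lam (k * h) = lam k * lam h := by
    intro k h
    refine hscal _ _ ?_
    rw [← hlam (k * h), hact_mul, hlam h, hact_smul, hlam k, smul_smul, mul_comm]
  refine ⟨w, u', ⟨⟨lam, hlam_one⟩, hlam_mul⟩, ⟨⟨mu, hmu_one⟩, hmu_mul⟩, hlam0, hmu0, li2,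
    hlam, hu'eig⟩

/-- A solvable reducible subgroup `K` of `GL(2,F)` of cube-free order `m` coprime to `p`
is conjugate to a subgroup of `D(2,q)`, and `K ≅ ℤ_l × ℤ_s` with `l ∣ q-1`, `s ∣ q-1`. -/
theorem reducible_cube_free_structure
    (p k₀ : ℕ) (hp : p.Prime) (hk₀ : 1 ≤ k₀)
    (F : Type) [Field F] [Fintype F] (hF : Fintype.card F = p ^ k₀)
    (K : Subgroup (GL (Fin 2) F)) (hsolv : IsSolvable ↥K) (hred : Reducible F K)
    (m : ℕ) (hm : Nat.card ↥K = m) (hcf : CubeFree m) (hpm : ¬ p ∣ m) :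
    (∃ g : GL (Fin 2) F, Subgroup.map (MulAut.conj g).toMonoidHom K ≤ Dsub F) ∧
    ∃ l s : ℕ, 0 < l ∧ 0 < s ∧ l ∣ p ^ k₀ - 1 ∧ s ∣ p ^ k₀ - 1 ∧
      Nonempty (↥K ≃* Multiplicative (ZMod l) × Multiplicative (ZMod s)) := by
  classical
  haveI : Finite (GL (Fin 2) F) := inferInstance
  haveI : Fintype ↥K := Fintype.ofFinite ↥K
  have hcharP : CharP F p := by
    have h1 := ringChar.charP F
    obtain ⟨n, hpr, hcard⟩ := FiniteField.card F (ringChar F)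
    have hdvd : ringChar F ∣ p ^ k₀ := by
      rw [← hF, hcard]; exact dvd_pow_self _ n.ne_zero
    have : ringChar F = p := (Nat.prime_dvd_prime_iff_eq hpr hp).mp (hpr.dvd_of_dvd_pow hdvd)
    rwa [this] at h1
  have hmF : ((Fintype.card ↥K : ℕ) : F) ≠ 0 := by
    rw [← Nat.card_eq_fintype_card, hm]
    intro h
    exact hpm ((CharP.cast_eq_zero_iff F p m).mp h)
  obtain ⟨w, u', lam, mu, hlam0, hmu0, li2, hlam, hmu⟩ := key F K hred hmF
  have hV2 : Module.finrank F (Fin 2 → F) = 2 := by simp [Module.finrank_pi]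
  set b2 : Module.Basis (Fin 2) F (Fin 2 → F) :=
    basisOfLinearIndependentOfCardEqFinrank li2 (by simp [hV2]) with hb2def
  have hb2 : ⇑b2 = ![w, u'] := coe_basisOfLinearIndependentOfCardEqFinrank li2 _
  have hw0 : w ≠ 0 := by
    intro h
    have := li2.ne_zero 0
    simp [h] at this
  -- matrices agreeing on the basis are equal
  have heq2 : ∀ A B : Matrix (Fin 2) (Fin 2) F,
      A.mulVec w = B.mulVec w → A.mulVec u' = B.mulVec u' → A = B := by
    intro A B h1 h2
    have h3 : A.mulVecLin = B.mulVecLin := by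
      refine b2.ext fun i => ?_
      fin_cases i <;> simp only [Matrix.mulVecLin_apply, hb2] <;>
        simpa [-Matrix.mulVec_fin_two] using (by assumption : _)
    funext i j
    have h4 := congrFun (LinearMap.congr_fun h3 (Pi.single j 1)) i
    simpa [Matrix.mulVecLin_apply, Matrix.mulVec_single] using h4
  -- the change of basis matrix
  set P : Matrix (Fin 2) (Fin 2) F := Matrix.of fun i j => ![w, u'] j i with hPdef
  have hdet : P.det ≠ 0 := by
    intro hd
    rw [Matrix.det_fin_two] at hd
    have hP00 : P 0 0 = w 0 := rfl
    have hP01 : P 0 1 = u' 0 := rfl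
    have hP10 : P 1 0 = w 1 := rfl
    have hP11 : P 1 1 = u' 1 := rfl
    rw [hP00, hP01, hP10, hP11] at hd
    -- hd : w 0 * u' 1 - u' 0 * w 1 = 0
    have key1 : ∀ i : Fin 2, (u' i) • w + (-(w i)) • u' = 0 → u' i = 0 ∧ w i = 0 := by
      intro i hzero
      obtain ⟨h1, h2⟩ := LinearIndependent.pair_iff.mp li2 _ _ hzero
      exact ⟨h1, by simpa using h2⟩
    have e1 : (u' 1) • w + (-(w 1)) • u' = 0 := by
      funext i
      fin_cases i
      · show u' 1 * w 0 + -(w 1) * u' 0 = 0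
        linear_combination hd
      · show u' 1 * w 1 + -(w 1) * u' 1 = 0
        ring
    have e2 : (u' 0) • w + (-(w 0)) • u' = 0 := by
      funext i
      fin_cases i
      · show u' 0 * w 0 + -(w 0) * u' 0 = 0
        ring
      · show u' 0 * w 1 + -(w 0) * u' 1 = 0
        linear_combination -hd
    obtain ⟨h1a, h1b⟩ := key1 1 e1
    obtain ⟨h2a, h2b⟩ := key1 0 e2
    apply hw0
    funext i
    fin_cases i
    · exact h2b
    · exact h1b
  have hP : IsUnit P := (Matrix.isUnit_iff_isUnit_det P).mpr (isUnit_iff_ne_zero.mpr hdet)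
  have hUP : (hP.unit : Matrix (Fin 2) (Fin 2) F) = P := hP.unit_spec
  have hdiag : ∀ k : ↥K, ((k : GL (Fin 2) F) : Matrix (Fin 2) (Fin 2) F) * P
      = P * Matrix.diagonal ![lam k, mu k] := by
    intro k
    ext i j
    rw [Matrix.mul_apply, Matrix.mul_diagonal]
    fin_cases j
    · have := congrFun (hlam k) i
      simp only [Matrix.mulVec, dotProduct, Pi.smul_apply, smul_eq_mul] at this
      calc ∑ l, ((k : GL (Fin 2) F) : Matrix (Fin 2) (Fin 2) F) i l * P l 0
          = lam k * w i := this
        _ = P i 0 * lam k := by rw [mul_comm]; rfl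
    · have := congrFun (hmu k) i
      simp only [Matrix.mulVec, dotProduct, Pi.smul_apply, smul_eq_mul] at this
      calc ∑ l, ((k : GL (Fin 2) F) : Matrix (Fin 2) (Fin 2) F) i l * P l 1
          = mu k * u' i := this
        _ = P i 1 * mu k := by rw [mul_comm]; rfl
  have hconj : ∀ k : ↥K,
      ((hP.unit⁻¹ * (k : GL (Fin 2) F) * hP.unit : GL (Fin 2) F) : Matrix (Fin 2) (Fin 2) F)
        = Matrix.diagonal ![lam k, mu k] := by
    intro k
    have h1 : ((k : GL (Fin 2) F) : Matrix (Fin 2) (Fin 2) F) * (hP.unit : Matrix (Fin 2) (Fin 2) F)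
        = (hP.unit : Matrix (Fin 2) (Fin 2) F) * Matrix.diagonal ![lam k, mu k] := by
      rw [hUP]; exact hdiag k
    calc ((hP.unit⁻¹ * (k : GL (Fin 2) F) * hP.unit : GL (Fin 2) F) : Matrix (Fin 2) (Fin 2) F)
        = (Units.val (hP.unit⁻¹)) *
            (((k : GL (Fin 2) F) : Matrix (Fin 2) (Fin 2) F) *
              (hP.unit : Matrix (Fin 2) (Fin 2) F)) := by
          rw [Units.val_mul, Units.val_mul, mul_assoc]
      _ = (Units.val (hP.unit⁻¹)) *
            ((hP.unit : Matrix (Fin 2) (Fin 2) F) * Matrix.diagonal ![lam k, mu k]) := by rw [h1]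
      _ = Matrix.diagonal ![lam k, mu k] := by rw [← mul_assoc, Units.inv_mul, one_mul]
  constructor
  · refine ⟨hP.unit⁻¹, ?_⟩
    rintro x ⟨k, hk, rfl⟩
    have hx : (((MulAut.conj hP.unit⁻¹).toMonoidHom k : GL (Fin 2) F) :
        Matrix (Fin 2) (Fin 2) F) = Matrix.diagonal ![lam ⟨k, hk⟩, mu ⟨k, hk⟩] := by
      have h := hconj ⟨k, hk⟩
      simpa [MulAut.conj_apply, inv_inv, mul_assoc] using h
    exact ⟨by rw [hx]; exact Matrix.diagonal_apply_ne _ (by decide),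
      by rw [hx]; exact Matrix.diagonal_apply_ne _ (by decide)⟩
  · have hcomm : ∀ x y : ↥K, x * y = y * x := by
      intro x y
      refine Subtype.ext (Units.ext (heq2 _ _ ?_ ?_))
      · rw [hlam (x * y), hlam (y * x), _root_.map_mul, _root_.map_mul, mul_comm]
      · rw [hmu (x * y), hmu (y * x), _root_.map_mul, _root_.map_mul, mul_comm]
    have hn : 0 < p ^ k₀ - 1 := by
      have h1 := hp.two_le
      have h2 : p ^ 1 ≤ p ^ k₀ := Nat.pow_le_pow_right (by omega) hk₀
      rw [pow_one] at h2
      omega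
    have hcardF : Fintype.card F - 1 = p ^ k₀ - 1 := by rw [hF]
    have hpow : ∀ x : ↥K, x ^ (p ^ k₀ - 1) = 1 := by
      intro x
      have hl : lam (x ^ (p ^ k₀ - 1)) = 1 := by
        rw [map_pow, ← hcardF, FiniteField.pow_card_sub_one_eq_one _ (hlam0 x)]
      have hmu' : mu (x ^ (p ^ k₀ - 1)) = 1 := by
        rw [map_pow, ← hcardF, FiniteField.pow_card_sub_one_eq_one _ (hmu0 x)]
      refine Subtype.ext (Units.ext (heq2 _ _ ?_ ?_))
      · rw [hlam (x ^ (p ^ k₀ - 1)), hl, one_smul]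
        exact (Matrix.one_mulVec w).symm
      · rw [hmu (x ^ (p ^ k₀ - 1)), hmu', one_smul]
        exact (Matrix.one_mulVec u').symm
    obtain ⟨l, s, hl0, hs0, hln, hsn, hiso⟩ := abelian_classify ↥K hcomm (p ^ k₀ - 1) hn hpow
      (by rw [hm]; exact hcf)
    exact ⟨l, s, hl0, hs0, hln, hsn, hiso⟩
end

section
/- Let g₁ and g₂ be elements of the coset ⟨h⟩b = { hⁱ b : i ∈ ℤ } both having order 2. Then g₁ and g₂ are conjugate in N. Consequently the elements of order 2 in ⟨h⟩b form a single conjugacy class of N. -/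
/-!
Write `q = p ^ k₀`. Since `b h b⁻¹ = h ^ q` and `b² = 1`, one computes `(h ^ i b)² = h ^ (i (q + 1))`
and `h ^ j (h ^ i b) h ^ (-j) = h ^ (i + (1 - q) j) b`. As `h` has order `(q - 1)(q + 1)`, the first
identity shows that `h ^ i b` has order 2 only if `q - 1 ∣ i`, and then the second one conjugates it
to `b`. Hence all involutions of the coset `⟨h⟩b` are conjugate to `b`.
-/

section SemidirectInvolutions

variable {G : Type*} [Group G] {h b : G} {q : ℤ}

theorem conj_zpow_of_conj_eq (hrel : b * h * b⁻¹ = h ^ q) (m : ℤ) :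
    b * h ^ m * b⁻¹ = h ^ (q * m) := by
  rw [← conj_zpow, hrel, zpow_mul]

theorem zpow_mul_sq_of_conj_eq (hb : b * b = 1) (hrel : b * h * b⁻¹ = h ^ q) (i : ℤ) :
    (h ^ i * b) ^ 2 = h ^ (i * (q + 1)) := by
  have hbinv : b⁻¹ = b := inv_eq_of_mul_eq_one_right hb
  calc (h ^ i * b) ^ 2 = h ^ i * (b * h ^ i * b⁻¹) := by rw [sq, hbinv]; group
    _ = h ^ (i * (q + 1)) := by rw [conj_zpow_of_conj_eq hrel, ← zpow_add]; ring_nf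

theorem conj_zpow_mul_of_conj_eq (hrel : b * h * b⁻¹ = h ^ q) (i j : ℤ) :
    h ^ j * (h ^ i * b) * (h ^ j)⁻¹ = h ^ (i + (1 - q) * j) * b := by
  calc h ^ j * (h ^ i * b) * (h ^ j)⁻¹ = h ^ j * h ^ i * (b * h ^ (-j) * b⁻¹) * b := by
        rw [zpow_neg]; group
    _ = h ^ (i + (1 - q) * j) * b := by
        rw [conj_zpow_of_conj_eq hrel, ← zpow_add, ← zpow_add]; ring_nf

theorem isConj_zpow_mul_of_dvd_sub (hrel : b * h * b⁻¹ = h ^ q) {i i' : ℤ}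
    (hdvd : 1 - q ∣ i' - i) : IsConj (h ^ i * b) (h ^ i' * b) := by
  obtain ⟨j, hj⟩ := hdvd
  refine isConj_iff.mpr ⟨h ^ j, ?_⟩
  rw [conj_zpow_mul_of_conj_eq hrel, ← hj, add_sub_cancel]

theorem dvd_of_zpow_mul_sq_eq_one (hb : b * b = 1) (hrel : b * h * b⁻¹ = h ^ q)
    (horder : (orderOf h : ℤ) = (q - 1) * (q + 1)) (hq : q + 1 ≠ 0) {i : ℤ}
    (hsq : (h ^ i * b) ^ 2 = 1) : q - 1 ∣ i := by
  rw [zpow_mul_sq_of_conj_eq hb hrel, ← orderOf_dvd_iff_zpow_eq_one, horder] at hsq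
  exact (mul_dvd_mul_iff_right hq).mp hsq

theorem isConj_of_zpow_mul_sq_eq_one (hb : b * b = 1) (hrel : b * h * b⁻¹ = h ^ q)
    (horder : (orderOf h : ℤ) = (q - 1) * (q + 1)) (hq : q + 1 ≠ 0) {i : ℤ}
    (hsq : (h ^ i * b) ^ 2 = 1) : IsConj b (h ^ i * b) := by
  have hdvd : 1 - q ∣ i - 0 := by
    rw [sub_zero, ← neg_sub, neg_dvd]
    exact dvd_of_zpow_mul_sq_eq_one hb hrel horder hq hsq
  simpa using isConj_zpow_mul_of_dvd_sub hrel hdvd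

end SemidirectInvolutions

theorem singer_normalizer_order_two_conj_general
    (p k₀ : ℕ) (hp : p.Prime)
    (G : Type) [Group G] (h b : G)
    (hh : orderOf h = (p ^ k₀) ^ 2 - 1)
    (hb : orderOf b = 2)
    (hrel : b * h * b⁻¹ = h ^ (p ^ k₀))
    (g₁ g₂ : G)
    (hg₁ : ∃ i : ℤ, g₁ = h ^ i * b) (hg₂ : ∃ i : ℤ, g₂ = h ^ i * b)
    (ho₁ : orderOf g₁ = 2) (ho₂ : orderOf g₂ = 2) :
    IsConj g₁ g₂ := by
  obtain ⟨i₁, rfl⟩ := hg₁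
  obtain ⟨i₂, rfl⟩ := hg₂
  set q : ℕ := p ^ k₀
  have hq : 1 ≤ q := Nat.one_le_pow _ _ hp.pos
  have hb2 : b * b = 1 := by rw [← sq, ← hb, pow_orderOf_eq_one]
  have hrel' : b * h * b⁻¹ = h ^ (q : ℤ) := by rwa [zpow_natCast]
  have horder : (orderOf h : ℤ) = ((q : ℤ) - 1) * ((q : ℤ) + 1) := by
    rw [hh, Nat.cast_sub (Nat.one_le_pow _ _ hq)]
    push_cast
    ring
  have hq' : (q : ℤ) + 1 ≠ 0 := by positivity
  have hconj : ∀ i : ℤ, orderOf (h ^ i * b) = 2 → IsConj b (h ^ i * b) := fun i hi =>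
    isConj_of_zpow_mul_sq_eq_one hb2 hrel' horder hq' (hi ▸ pow_orderOf_eq_one _)
  exact ((hconj i₁ ho₁).symm).trans (hconj i₂ ho₂)

/-- In the abstract model `N = ⟨h⟩ ⋊ ⟨b⟩` of the normalizer of a Singer cycle of
`GL(2,q)` (with `orderOf h = q² - 1`, `orderOf b = 2`, `b h b⁻¹ = h^q`), any two
elements of order 2 in the coset `⟨h⟩b` are conjugate in `N`. -/
theorem singer_normalizer_order_two_conj
    (p k₀ : ℕ) (hp : p.Prime) (hk₀ : 1 ≤ k₀)
    (G : Type) [Group G] (h b : G)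
    (hgen : Subgroup.closure ({h, b} : Set G) = ⊤)
    (hh : orderOf h = (p ^ k₀) ^ 2 - 1)
    (hb : orderOf b = 2)
    (hrel : b * h * b⁻¹ = h ^ (p ^ k₀))
    (g₁ g₂ : G)
    (hg₁ : ∃ i : ℤ, g₁ = h ^ i * b) (hg₂ : ∃ i : ℤ, g₂ = h ^ i * b)
    (ho₁ : orderOf g₁ = 2) (ho₂ : orderOf g₂ = 2) :
    IsConj g₁ g₂ :=
  singer_normalizer_order_two_conj_general p k₀ hp G h b hh hb hrel g₁ g₂ hg₁ hg₂ ho₁ ho₂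
end

section
/- Assume p is odd and let g = h^{(q−1)/2}·b. Then the centralizer of g in N equals the subgroup of N generated by g and h^{q+1}, the conjugacy class of g in N has exactly q+1 elements, and this conjugacy class is precisely the set of elements of order 4 in the coset ⟨h⟩b. -/
/-!
Every element of `N` is `h ^ i` or `h ^ i * b`, and `b * h ^ j * b⁻¹ = h ^ (q * j)`. Conjugating
`h ^ i * b` shifts the exponent `i` by a multiple of `q - 1`, and every such shift occurs, so
the class of `h ^ i * b` is the coset `⟨h ^ (q - 1)⟩ * (h ^ i * b)`, of size
`orderOf (h ^ (q - 1)) = q + 1`.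
Since `(h ^ j * b) ^ 2 = h ^ ((q + 1) * j)` and `h ^ (q + 1)` has order `q - 1`, the element
`h ^ j * b` has order 4 iff `q - 1 ∤ j` but `q - 1 ∣ 2 * j`, i.e. iff
`j ≡ (q - 1) / 2 [ZMOD q - 1]`.
Likewise `h ^ k` and `h ^ k * b` commute with `h ^ i * b` iff `q + 1` divides `k`, resp. `k - i`.
-/

theorem Int.not_dvd_and_dvd_two_mul_iff {M j : ℤ} (hM : M ≠ 0) :
    (¬ 2 * M ∣ j ∧ 2 * M ∣ 2 * j) ↔ 2 * M ∣ j - M := by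
  rw [mul_dvd_mul_iff_left two_ne_zero]
  constructor
  · rintro ⟨hj, s, rfl⟩
    obtain ⟨u, rfl | rfl⟩ := Int.even_or_odd' s
    · exact absurd ⟨u, by ring⟩ hj
    · exact ⟨u, by ring⟩
  · rintro ⟨u, hu⟩
    obtain rfl : j = M * (2 * u + 1) := by linarith
    refine ⟨fun ⟨v, hv⟩ => ?_, 2 * u + 1, rfl⟩
    have : 2 * u + 1 = 2 * v := mul_left_cancel₀ hM (by linarith)
    omega

theorem orderOf_eq_four_iff {G : Type*} [Monoid G] {x : G} :
    orderOf x = 4 ↔ ¬ x ^ 2 = 1 ∧ x ^ 4 = 1 := by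
  refine ⟨fun hx => ⟨fun h2 => ?_, hx ▸ pow_orderOf_eq_one x⟩,
    fun ⟨h2, h4⟩ => orderOf_eq_prime_pow (p := 2) (n := 1) h2 h4⟩
  have := orderOf_dvd_of_pow_eq_one h2
  rw [hx] at this
  norm_num at this

theorem zpow_mul_eq_one_iff_of_orderOf_eq_mul {G : Type*} [Group G] {x : G} {m n : ℤ}
    (hx : (orderOf x : ℤ) = n * m) (hn : n ≠ 0) (k : ℤ) : x ^ (n * k) = 1 ↔ m ∣ k := by
  rw [← orderOf_dvd_iff_zpow_eq_one, hx, mul_dvd_mul_iff_left hn]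

namespace SingerNormalizer

variable {G : Type*} [Group G] {q : ℕ} {h b : G}

theorem natCast_orderOf_eq_mul (hq : 1 ≤ q) (hh : orderOf h = q ^ 2 - 1) :
    (orderOf h : ℤ) = ((q : ℤ) - 1) * ((q : ℤ) + 1) := by
  push_cast [hh, Nat.one_le_pow 2 q hq]
  ring

theorem zpow_sub_one_mul_eq_one_iff (hq : 2 ≤ q) (hh : orderOf h = q ^ 2 - 1) (k : ℤ) :
    h ^ (((q : ℤ) - 1) * k) = 1 ↔ ((q : ℤ) + 1) ∣ k :=
  zpow_mul_eq_one_iff_of_orderOf_eq_mul (natCast_orderOf_eq_mul (by omega) hh) (by omega) k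

theorem zpow_add_one_mul_eq_one_iff (hq : 1 ≤ q) (hh : orderOf h = q ^ 2 - 1) (k : ℤ) :
    h ^ (((q : ℤ) + 1) * k) = 1 ↔ ((q : ℤ) - 1) ∣ k :=
  zpow_mul_eq_one_iff_of_orderOf_eq_mul (by rw [natCast_orderOf_eq_mul hq hh, mul_comm])
    (by omega) k

theorem orderOf_pow_sub_one (hq : 2 ≤ q) (hh : orderOf h = q ^ 2 - 1) :
    orderOf (h ^ (q - 1)) = q + 1 := by
  have hh' : orderOf h = (q - 1) * (q + 1) := by rw [hh, mul_comm, ← Nat.sq_sub_sq, one_pow]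
  rw [orderOf_pow_of_dvd (by omega) (hh' ▸ dvd_mul_right _ _), hh',
    Nat.mul_div_cancel_left _ (by omega)]

theorem mul_zpow_eq_zpow_mul (hrel : b * h * b⁻¹ = h ^ q) (j : ℤ) :
    b * h ^ j = h ^ ((q : ℤ) * j) * b := by
  have hconj : b * h ^ j * b⁻¹ = h ^ ((q : ℤ) * j) := by
    rw [← conj_zpow, hrel, ← zpow_natCast, ← zpow_mul]
  rw [← hconj, inv_mul_cancel_right]

theorem zpow_mul_mul_zpow (hrel : b * h * b⁻¹ = h ^ q) (i j : ℤ) :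
    h ^ i * b * h ^ j = h ^ (i + q * j) * b := by
  rw [mul_assoc, mul_zpow_eq_zpow_mul hrel, ← mul_assoc, ← zpow_add]

theorem zpow_mul_mul_zpow_mul (hb : b ^ 2 = 1) (hrel : b * h * b⁻¹ = h ^ q) (i j : ℤ) :
    h ^ i * b * (h ^ j * b) = h ^ (i + q * j) := by
  rw [← mul_assoc, zpow_mul_mul_zpow hrel, mul_assoc, ← sq, hb, mul_one]

theorem zpow_mul_sq (hb : b ^ 2 = 1) (hrel : b * h * b⁻¹ = h ^ q) (i : ℤ) :
    (h ^ i * b) ^ 2 = h ^ (((q : ℤ) + 1) * i) := by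
  rw [sq, zpow_mul_mul_zpow_mul hb hrel]
  ring_nf

theorem zpow_mul_inv (hb : b ^ 2 = 1) (hrel : b * h * b⁻¹ = h ^ q) (i : ℤ) :
    (h ^ i * b)⁻¹ = h ^ (-(q * i) : ℤ) * b := by
  rw [mul_inv_rev, inv_eq_of_mul_eq_one_right (sq b ▸ hb), ← zpow_neg, mul_zpow_eq_zpow_mul hrel,
    mul_neg]

theorem exists_eq_zpow_or_eq_zpow_mul (hgen : Subgroup.closure {h, b} = ⊤) (hb : b ^ 2 = 1)
    (hrel : b * h * b⁻¹ = h ^ q) (x : G) : (∃ i : ℤ, x = h ^ i) ∨ ∃ i : ℤ, x = h ^ i * b := by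
  have hx : x ∈ Subgroup.closure {h, b} := hgen ▸ Subgroup.mem_top x
  induction hx using Subgroup.closure_induction with
  | mem y hy =>
    rcases hy with rfl | rfl
    · exact .inl ⟨1, (zpow_one y).symm⟩
    · exact .inr ⟨0, by rw [zpow_zero, one_mul]⟩
  | one => exact .inl ⟨0, (zpow_zero h).symm⟩
  | mul y z _ _ hy hz =>
    rcases hy with ⟨i, rfl⟩ | ⟨i, rfl⟩ <;> rcases hz with ⟨j, rfl⟩ | ⟨j, rfl⟩
    · exact .inl ⟨i + j, (zpow_add h i j).symm⟩
    · exact .inr ⟨i + j, by rw [← mul_assoc, ← zpow_add]⟩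
    · exact .inr ⟨i + q * j, zpow_mul_mul_zpow hrel i j⟩
    · exact .inl ⟨i + q * j, zpow_mul_mul_zpow_mul hb hrel i j⟩
  | inv y _ hy =>
    rcases hy with ⟨i, rfl⟩ | ⟨i, rfl⟩
    · exact .inl ⟨-i, (zpow_neg h i).symm⟩
    · exact .inr ⟨-(q * i), zpow_mul_inv hb hrel i⟩

theorem isConj_zpow_mul_iff (hgen : Subgroup.closure {h, b} = ⊤) (hb : b ^ 2 = 1)
    (hrel : b * h * b⁻¹ = h ^ q) (i : ℤ) (x : G) :
    IsConj (h ^ i * b) x ↔ ∃ j : ℤ, x = h ^ j * b ∧ ((q : ℤ) - 1) ∣ j - i := by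
  rw [isConj_iff]
  constructor
  · rintro ⟨c, rfl⟩
    rcases exists_eq_zpow_or_eq_zpow_mul hgen hb hrel c with ⟨k, rfl⟩ | ⟨k, rfl⟩
    · refine ⟨k + i + q * -k, ?_, -k, by ring⟩
      rw [← zpow_neg, ← mul_assoc, ← zpow_add, zpow_mul_mul_zpow hrel]
    · refine ⟨k + q * i + -(q * k), ?_, i - k, by ring⟩
      rw [zpow_mul_inv hb hrel, zpow_mul_mul_zpow_mul hb hrel, ← mul_assoc, ← zpow_add]
  · rintro ⟨j, rfl, t, ht⟩
    refine ⟨h ^ (-t), ?_⟩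
    rw [← zpow_neg, neg_neg, ← mul_assoc, ← zpow_add, zpow_mul_mul_zpow hrel]
    congr 2
    linarith

theorem isConj_zpow_mul_iff_mul_inv_mem (hq : 1 ≤ q) (hgen : Subgroup.closure {h, b} = ⊤)
    (hb : b ^ 2 = 1) (hrel : b * h * b⁻¹ = h ^ q) (i : ℤ) (x : G) :
    IsConj (h ^ i * b) x ↔ x * (h ^ i * b)⁻¹ ∈ Subgroup.zpowers (h ^ (q - 1)) := by
  have hpow : ∀ t : ℤ, (h ^ (q - 1)) ^ t * (h ^ i * b) = h ^ (((q : ℤ) - 1) * t + i) * b := by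
    intro t
    rw [← zpow_natCast, ← zpow_mul, ← mul_assoc, ← zpow_add, Nat.cast_sub hq, Nat.cast_one]
  simp only [isConj_zpow_mul_iff hgen hb hrel, Subgroup.mem_zpowers_iff, eq_mul_inv_iff_mul_eq,
    hpow]
  constructor
  · rintro ⟨j, rfl, t, ht⟩
    exact ⟨t, by rw [← ht, sub_add_cancel]⟩
  · rintro ⟨t, rfl⟩
    exact ⟨_, rfl, t, add_sub_cancel_right _ _⟩

theorem card_isConj_zpow_mul (hq : 2 ≤ q) (hgen : Subgroup.closure {h, b} = ⊤)
    (hb : b ^ 2 = 1) (hrel : b * h * b⁻¹ = h ^ q) (hh : orderOf h = q ^ 2 - 1) (i : ℤ) :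
    Nat.card {x // IsConj (h ^ i * b) x} = q + 1 := by
  rw [← orderOf_pow_sub_one hq hh, ← Nat.card_zpowers]
  exact Nat.card_congr <| Equiv.subtypeEquiv (Equiv.mulRight (h ^ i * b)⁻¹)
    (isConj_zpow_mul_iff_mul_inv_mem (by omega) hgen hb hrel i)

theorem zpow_commute_zpow_mul_iff (hq : 2 ≤ q) (hrel : b * h * b⁻¹ = h ^ q)
    (hh : orderOf h = q ^ 2 - 1) (i k : ℤ) :
    h ^ k * (h ^ i * b) = h ^ i * b * h ^ k ↔ ((q : ℤ) + 1) ∣ k := by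
  rw [← mul_assoc, ← zpow_add, zpow_mul_mul_zpow hrel, mul_left_inj, eq_comm, ← mul_inv_eq_one,
    ← zpow_sub, ← zpow_sub_one_mul_eq_one_iff hq hh]
  ring_nf

theorem zpow_mul_commute_zpow_mul_iff (hq : 2 ≤ q) (hb : b ^ 2 = 1)
    (hrel : b * h * b⁻¹ = h ^ q) (hh : orderOf h = q ^ 2 - 1) (i k : ℤ) :
    h ^ k * b * (h ^ i * b) = h ^ i * b * (h ^ k * b) ↔ ((q : ℤ) + 1) ∣ k - i := by
  rw [zpow_mul_mul_zpow_mul hb hrel, zpow_mul_mul_zpow_mul hb hrel, eq_comm, ← mul_inv_eq_one,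
    ← zpow_sub, ← zpow_sub_one_mul_eq_one_iff hq hh]
  ring_nf

theorem centralizer_zpow_mul (hq : 2 ≤ q) (hgen : Subgroup.closure {h, b} = ⊤)
    (hb : b ^ 2 = 1) (hrel : b * h * b⁻¹ = h ^ q) (hh : orderOf h = q ^ 2 - 1) (i : ℤ) :
    Subgroup.centralizer {h ^ i * b} = Subgroup.closure {h ^ i * b, h ^ (q + 1)} := by
  have hpow : ∀ c : ℤ, h ^ (((q : ℤ) + 1) * c) = (h ^ (q + 1)) ^ c := fun c => by
    rw [zpow_mul]; norm_cast
  have hgen_mem : h ^ (q + 1) ∈ Subgroup.closure {h ^ i * b, h ^ (q + 1)} :=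
    Subgroup.subset_closure (by simp)
  apply le_antisymm
  · intro x hx
    rw [Subgroup.mem_centralizer_singleton_iff] at hx
    rcases exists_eq_zpow_or_eq_zpow_mul hgen hb hrel x with ⟨k, rfl⟩ | ⟨k, rfl⟩
    · obtain ⟨c, rfl⟩ := (zpow_commute_zpow_mul_iff hq hrel hh i k).1 hx
      rw [hpow]
      exact Subgroup.zpow_mem _ hgen_mem c
    · obtain ⟨c, hc⟩ := (zpow_mul_commute_zpow_mul_iff hq hb hrel hh i k).1 hx
      rw [sub_eq_iff_eq_add.1 hc, zpow_add, hpow, mul_assoc]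
      exact Subgroup.mul_mem _ (Subgroup.zpow_mem _ hgen_mem c) (Subgroup.subset_closure (by simp))
  · rw [Subgroup.closure_le, Set.insert_subset_iff, Set.singleton_subset_iff,
      SetLike.mem_coe, Subgroup.mem_centralizer_singleton_iff, SetLike.mem_coe,
      Subgroup.mem_centralizer_singleton_iff, ← zpow_natCast, Nat.cast_add, Nat.cast_one,
      zpow_commute_zpow_mul_iff hq hrel hh]
    exact ⟨rfl, dvd_rfl⟩

theorem orderOf_zpow_mul_eq_four_iff (hq : 1 ≤ q) (hb : b ^ 2 = 1)
    (hrel : b * h * b⁻¹ = h ^ q) (hh : orderOf h = q ^ 2 - 1) (j : ℤ) :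
    orderOf (h ^ j * b) = 4 ↔ ¬ ((q : ℤ) - 1) ∣ j ∧ ((q : ℤ) - 1) ∣ 2 * j := by
  rw [orderOf_eq_four_iff, show 4 = 2 * 2 from rfl, pow_mul, zpow_mul_sq hb hrel,
    ← zpow_natCast, ← zpow_mul, mul_assoc, mul_comm j, zpow_add_one_mul_eq_one_iff hq hh,
    zpow_add_one_mul_eq_one_iff hq hh]
  rfl

theorem isConj_iff_orderOf_eq_four {M : ℤ} (hq : 3 ≤ q) (hM : (q : ℤ) - 1 = 2 * M)
    (hgen : Subgroup.closure {h, b} = ⊤) (hb : b ^ 2 = 1) (hrel : b * h * b⁻¹ = h ^ q)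
    (hh : orderOf h = q ^ 2 - 1) (x : G) :
    IsConj (h ^ M * b) x ↔ (∃ j : ℤ, x = h ^ j * b) ∧ orderOf x = 4 := by
  have hfour : ∀ j : ℤ, orderOf (h ^ j * b) = 4 ↔ ((q : ℤ) - 1) ∣ j - M := fun j => by
    rw [orderOf_zpow_mul_eq_four_iff (by omega) hb hrel hh, hM,
      Int.not_dvd_and_dvd_two_mul_iff (by omega)]
  rw [isConj_zpow_mul_iff hgen hb hrel]
  constructor
  · rintro ⟨j, rfl, hj⟩
    exact ⟨⟨j, rfl⟩, (hfour j).2 hj⟩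
  · rintro ⟨⟨j, rfl⟩, hj⟩
    exact ⟨j, rfl, (hfour j).1 hj⟩

end SingerNormalizer

open SingerNormalizer in
/-- In the abstract model `N = ⟨h⟩ ⋊ ⟨b⟩` of the normalizer of a Singer cycle of
`GL(2,q)` (with `orderOf h = q² - 1`, `orderOf b = 2`, `b h b⁻¹ = h^q`), assume `p`
is odd and let `g = h^((q-1)/2) * b`. Then the centralizer of `g` in `N` is the
subgroup generated by `g` and `h^(q+1)`, the conjugacy class of `g` has exactly
`q + 1` elements, and this class is precisely the set of elements of order 4 in the
coset `⟨h⟩b`. -/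
theorem singer_normalizer_order_four_class
    (p k₀ : ℕ) (hp : p.Prime) (hodd : Odd p) (hk₀ : 1 ≤ k₀)
    (G : Type) [Group G] (h b : G)
    (hgen : Subgroup.closure ({h, b} : Set G) = ⊤)
    (hh : orderOf h = (p ^ k₀) ^ 2 - 1)
    (hb : orderOf b = 2)
    (hrel : b * h * b⁻¹ = h ^ (p ^ k₀))
    (g : G) (hg : g = h ^ ((p ^ k₀ - 1) / 2) * b) :
    Subgroup.centralizer {g} = Subgroup.closure {g, h ^ (p ^ k₀ + 1)} ∧
    Nat.card {x : G // IsConj g x} = p ^ k₀ + 1 ∧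
    (∀ x : G, IsConj g x ↔ ((∃ i : ℤ, x = h ^ i * b) ∧ orderOf x = 4)) := by
  have hp3 : 3 ≤ p := by
    have := hp.two_le
    have := Nat.odd_iff.1 hodd
    omega
  have hq : 3 ≤ p ^ k₀ := hp3.trans (Nat.le_self_pow (by omega) p)
  have hM : ((p ^ k₀ : ℕ) : ℤ) - 1 = 2 * ((p ^ k₀ - 1) / 2 : ℕ) := by
    have := Nat.odd_iff.1 (hodd.pow (n := k₀))
    omega
  have hb2 : b ^ 2 = 1 := hb ▸ pow_orderOf_eq_one b
  rw [← zpow_natCast] at hg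
  subst hg
  exact ⟨centralizer_zpow_mul (by omega) hgen hb2 hrel hh _,
    card_isConj_zpow_mul (by omega) hgen hb2 hrel hh _,
    isConj_iff_orderOf_eq_four hq hM hgen hb2 hrel hh⟩
end
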